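/- arXiv:2502.21070 — 12 statements merged into one kernel-verified Lean document; each statement's English description precedes it below -/
import Mathlib

section
/- Let (D, ≺⊢, ≺⊣, ≻⊢, ≻⊣) be a quadri-dendriform algebra over a field K of characteristic zero. Define x ⊢ y = x≺⊢y + x≻⊢y and x ⊣ y = x≺⊣y + x≻⊣y for all x, y ∈ D. Then (D, ⊢, ⊣) is a di-associative algebra. -/
/-- A bilinear map between modules over `K`. -/
def IsBilin (K : Type*) [Field K] {A B C : Type*}
    [AddCommGroup A] [Module K A] [AddCommGroup B] [Module K B]
    [AddCommGroup C] [Module K C] (f : A → B → C) : Prop :=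
  (∀ a a' b, f (a + a') b = f a b + f a' b) ∧
  (∀ (c : K) a b, f (c • a) b = c • f a b) ∧
  (∀ a b b', f a (b + b') = f a b + f a b') ∧
  (∀ (c : K) a b, f a (c • b) = c • f a b)

/-- A dendriform algebra structure `(D, ≺ = p, ≻ = s)`. -/
structure IsDendriform (K : Type*) [Field K] [CharZero K]
    (D : Type*) [AddCommGroup D] [Module K D]
    (p s : D → D → D) : Prop where
  bil_p : IsBilin K p
  bil_s : IsBilin K s
  d1 : ∀ x y z, p (p x y) z = p x (p y z + s y z)
  d2 : ∀ x y z, p (s x y) z = s x (p y z)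
  d3 : ∀ x y z, s x (s y z) = s (p x y + s x y) z

/-- A representation `(V; ≺ₗ = pl, ≻ₗ = sl, ≺ᵣ = pr, ≻ᵣ = sr)` of a dendriform
algebra `(D, p, s)`. -/
structure IsDendRep (K : Type*) [Field K] [CharZero K]
    (D : Type*) [AddCommGroup D] [Module K D]
    (V : Type*) [AddCommGroup V] [Module K V]
    (p s : D → D → D)
    (pl sl : D → V → V) (pr sr : V → D → V) : Prop where
  bil_pl : IsBilin K pl
  bil_sl : IsBilin K sl
  bil_pr : IsBilin K pr
  bil_sr : IsBilin K sr
  r1 : ∀ x y u, pl (p x y) u = pl x (pl y u + sl y u)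
  r2 : ∀ x y u, pl (s x y) u = sl x (pl y u)
  r3 : ∀ x y u, sl x (sl y u) = sl (p x y + s x y) u
  r4 : ∀ x u z, pr (pl x u) z = pl x (pr u z + sr u z)
  r5 : ∀ x u z, pr (sl x u) z = sl x (pr u z)
  r6 : ∀ x u z, sl x (sr u z) = sr (pl x u + sl x u) z
  r7 : ∀ u y z, pr (pr u y) z = pr u (p y z + s y z)
  r8 : ∀ u y z, pr (sr u y) z = sr u (p y z)
  r9 : ∀ u y z, sr u (s y z) = sr (pr u y + sr u y) z

/-- A quadri-dendriform algebra `(D, ≺⊢ = pv, ≺⊣ = pd, ≻⊢ = sv, ≻⊣ = sd)`. -/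
structure IsQuadriDendriform (K : Type*) [Field K] [CharZero K]
    (D : Type*) [AddCommGroup D] [Module K D]
    (pv pd sv sd : D → D → D) : Prop where
  bil_pv : IsBilin K pv
  bil_pd : IsBilin K pd
  bil_sv : IsBilin K sv
  bil_sd : IsBilin K sd
  q1a : ∀ x y z, pv (pv x y) z = pv x (pv y z + sv y z)
  q1b : ∀ x y z, pv (pd x y) z = pv x (pv y z + sv y z)
  q2a : ∀ x y z, pv (sv x y) z = sv x (pv y z)
  q2b : ∀ x y z, pv (sd x y) z = sv x (pv y z)
  q3a : ∀ x y z, sv x (sv y z) = sv (pv x y + sv x y) z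
  q3b : ∀ x y z, sv x (sv y z) = sv (pd x y + sd x y) z
  q3c : ∀ x y z, sv x (sv y z) = sv (pv x y + sd x y) z
  q3d : ∀ x y z, sv x (sv y z) = sv (pd x y + sv x y) z
  q4 : ∀ x y z, pd (pv x y) z = pv x (pd y z + sd y z)
  q5 : ∀ x y z, pd (sv x y) z = sv x (pd y z)
  q6 : ∀ x y z, sv x (sd y z) = sd (pv x y + sv x y) z
  q7a : ∀ x y z, pd (pd x y) z = pd x (pv y z + sv y z)
  q7b : ∀ x y z, pd (pd x y) z = pd x (pd y z + sd y z)
  q7c : ∀ x y z, pd (pd x y) z = pd x (pv y z + sd y z)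
  q7d : ∀ x y z, pd (pd x y) z = pd x (pd y z + sv y z)
  q8a : ∀ x y z, pd (sd x y) z = sd x (pv y z)
  q8b : ∀ x y z, pd (sd x y) z = sd x (pd y z)
  q9a : ∀ x y z, sd x (sv y z) = sd x (sd y z)
  q9b : ∀ x y z, sd x (sd y z) = sd (pd x y + sd x y) z

/-- A di-associative algebra `(A, ⊢ = l, ⊣ = r)`. -/
structure IsDiassoc (K : Type*) [Field K] [CharZero K]
    (A : Type*) [AddCommGroup A] [Module K A]
    (l r : A → A → A) : Prop where
  bil_l : IsBilin K l
  bil_r : IsBilin K r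
  d1 : ∀ x y z, r (r x y) z = r x (r y z)
  d2 : ∀ x y z, r (r x y) z = r x (l y z)
  d3 : ∀ x y z, r (l x y) z = l x (r y z)
  d4 : ∀ x y z, l (r x y) z = l x (l y z)
  d5 : ∀ x y z, l (l x y) z = l x (l y z)

/-- A tri-associative algebra `(A, ⊢ = l, ⊣ = r, ⊥ = m)`. -/
structure IsTriassoc (K : Type*) [Field K] [CharZero K]
    (A : Type*) [AddCommGroup A] [Module K A]
    (l r m : A → A → A) : Prop where
  di : IsDiassoc K A l r
  bil_m : IsBilin K m
  massoc : ∀ x y z, m (m x y) z = m x (m y z)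
  t1 : ∀ x y z, r (r x y) z = r x (m y z)
  t2 : ∀ x y z, r (m x y) z = m x (r y z)
  t3 : ∀ x y z, m (r x y) z = m x (l y z)
  t4 : ∀ x y z, m (l x y) z = l x (m y z)
  t5 : ∀ x y z, l (m x y) z = l x (l y z)

/-- An action of a dendriform algebra `(D, p, s)` on a dendriform algebra
`(D', p', s')` via `(pl, sl, pr, sr)`. -/
structure IsDendAction (K : Type*) [Field K] [CharZero K]
    (D : Type*) [AddCommGroup D] [Module K D]
    (D' : Type*) [AddCommGroup D'] [Module K D']
    (p s : D → D → D) (p' s' : D' → D' → D')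
    (pl sl : D → D' → D') (pr sr : D' → D → D') : Prop where
  rep : IsDendRep K D D' p s pl sl pr sr
  a1 : ∀ x v w, p' (pl x v) w = pl x (p' v w + s' v w)
  a2 : ∀ x v w, p' (sl x v) w = sl x (p' v w)
  a3 : ∀ x v w, sl x (s' v w) = s' (pl x v + sl x v) w
  a4 : ∀ u y w, p' (pr u y) w = p' u (pl y w + sl y w)
  a5 : ∀ u y w, p' (sr u y) w = s' u (pl y w)
  a6 : ∀ u y w, s' u (sl y w) = s' (pr u y + sr u y) w
  a7 : ∀ u v z, pr (p' u v) z = p' u (pr v z + sr v z)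
  a8 : ∀ u v z, pr (s' u v) z = s' u (pr v z)
  a9 : ∀ u v z, s' u (sr v z) = sr (p' u v + s' u v) z

/-- A six-dendriform algebra
`(D, ≺⊥ = pp, ≻⊥ = sp, ≺⊢ = pv, ≺⊣ = pd, ≻⊢ = sv, ≻⊣ = sd)`. -/
structure IsSixDendriform (K : Type*) [Field K] [CharZero K]
    (D : Type*) [AddCommGroup D] [Module K D]
    (pp sp pv pd sv sd : D → D → D) : Prop where
  dend : IsDendriform K D pp sp
  quad : IsQuadriDendriform K D pv pd sv sd
  e1 : ∀ x y z, pp (pv x y) z = pv x (pp y z + sp y z)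
  e2 : ∀ x y z, pp (sv x y) z = sv x (pp y z)
  e3 : ∀ x y z, sv x (sp y z) = sp (pv x y + sv x y) z
  e4 : ∀ x y z, pp (pd x y) z = pp x (pv y z + sv y z)
  e5 : ∀ x y z, pp (sd x y) z = sp x (pv y z)
  e6 : ∀ x y z, sp x (sv y z) = sp (pd x y + sd x y) z
  e7 : ∀ x y z, pd (pp x y) z = pp x (pd y z + sd y z)
  e8 : ∀ x y z, pd (sp x y) z = sp x (pd y z)
  e9 : ∀ x y z, sp x (sd y z) = sd (pp x y + sp x y) z
  e10a : ∀ x y z, pv (pp x y) z = pv (pv x y) z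
  e10b : ∀ x y z, pv (pv x y) z = pv (pd x y) z
  e11a : ∀ x y z, pv (sp x y) z = pv (sv x y) z
  e11b : ∀ x y z, pv (sv x y) z = pv (sd x y) z
  e12a : ∀ x y z, sv (pp x y) z = sv (pv x y) z
  e12b : ∀ x y z, sv (pv x y) z = sv (pd x y) z
  e13a : ∀ x y z, sv (sp x y) z = sv (sv x y) z
  e13b : ∀ x y z, sv (sv x y) z = sv (sd x y) z
  e14a : ∀ x y z, pd x (pp y z) = pd x (pv y z)
  e14b : ∀ x y z, pd x (pv y z) = pd x (pd y z)
  e15a : ∀ x y z, sd x (pp y z) = sd x (pv y z)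
  e15b : ∀ x y z, sd x (pv y z) = sd x (pd y z)
  e16a : ∀ x y z, pd x (sp y z) = pd x (sv y z)
  e16b : ∀ x y z, pd x (sv y z) = pd x (sd y z)
  e17a : ∀ x y z, sd x (sp y z) = sd x (sv y z)
  e17b : ∀ x y z, sd x (sv y z) = sd x (sd y z)

/-- An averaging operator on a dendriform algebra `(D, p, s)`. -/
def IsAveraging (K : Type*) [Field K] [CharZero K]
    (D : Type*) [AddCommGroup D] [Module K D]
    (p s : D → D → D) (T : D →ₗ[K] D) : Prop :=
  ∀ x y : D,
    p (T x) (T y) = T (p (T x) y) ∧ p (T x) (T y) = T (p x (T y)) ∧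
    s (T x) (T y) = T (s (T x) y) ∧ s (T x) (T y) = T (s x (T y))

/-- A relative averaging operator `T : V → D` on a dendriform algebra `(D, p, s)`
with respect to a representation `(V; pl, sl, pr, sr)`. -/
def IsRelAveraging (K : Type*) [Field K] [CharZero K]
    (D : Type*) [AddCommGroup D] [Module K D]
    (V : Type*) [AddCommGroup V] [Module K V]
    (p s : D → D → D)
    (pl sl : D → V → V) (pr sr : V → D → V)
    (T : V →ₗ[K] D) : Prop :=
  ∀ u v : V,
    p (T u) (T v) = T (pl (T u) v) ∧ p (T u) (T v) = T (pr u (T v)) ∧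
    s (T u) (T v) = T (sl (T u) v) ∧ s (T u) (T v) = T (sr u (T v))


theorem stmt_1 (K : Type*) [Field K] [CharZero K]
    (D : Type*) [AddCommGroup D] [Module K D]
    (pv pd sv sd : D → D → D)
    (h : IsQuadriDendriform K D pv pd sv sd) :
    IsDiassoc K D (fun x y => pv x y + sv x y) (fun x y => pd x y + sd x y) := by
  obtain ⟨⟨pv1, pv2, pv3, pv4⟩, ⟨pd1, pd2, pd3, pd4⟩, ⟨sv1, sv2, sv3, sv4⟩,
    ⟨sd1, sd2, sd3, sd4⟩, q1a, q1b, q2a, q2b, q3a, q3b, q3c, q3d, q4, q5, q6,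
    q7a, q7b, q7c, q7d, q8a, q8b, q9a, q9b⟩ := h
  refine ⟨⟨?_, ?_, ?_, ?_⟩, ⟨?_, ?_, ?_, ?_⟩, ?_, ?_, ?_, ?_, ?_⟩ <;> intro x y z
  · simp only [pv1, sv1]; abel
  · simp only [pv2, sv2, smul_add]
  · simp only [pv3, sv3]; abel
  · simp only [pv4, sv4, smul_add]
  · simp only [pd1, sd1]; abel
  · simp only [pd2, sd2, smul_add]
  · simp only [pd3, sd3]; abel
  · simp only [pd4, sd4, smul_add]
  · -- r (r x y) z = r x (r y z)
    rw [pd1, q7b, q8b, ← q9b, pd3, sd3]; abel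
  · -- r (r x y) z = r x (l y z)
    rw [pd1, q7a, q8a, ← q9b, ← q9a, pd3, sd3]; abel
  · -- r (l x y) z = l x (r y z)
    rw [pd1, q4, q5, ← q6, sv3]; abel
  · -- l (r x y) z = l x (l y z)
    rw [pv1, q1b, q2b, ← q3b, pv3, sv3]; abel
  · -- l (l x y) z = l x (l y z)
    rw [pv1, q1a, q2a, ← q3a, pv3, sv3]; abel
end

section
/- Let (D, ≺⊢, ≺⊣, ≻⊢, ≻⊣) be a quadri-dendriform algebra and let I_D be the linear span of the set { x≺⊢y − x≺⊣y, x≻⊢y − x≻⊣y : x, y ∈ D }. Then I_D is a two-sided ideal of D: for every a ∈ I_D, every z ∈ D, and every operation ∗ ∈ {≺⊢, ≺⊣, ≻⊢, ≻⊣}, both a ∗ z and z ∗ a belong to I_D. -/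
theorem stmt_2 (K : Type*) [Field K] [CharZero K]
    (D : Type*) [AddCommGroup D] [Module K D]
    (pv pd sv sd : D → D → D)
    (h : IsQuadriDendriform K D pv pd sv sd)
    (I : Submodule K D)
    (hI : I = Submodule.span K
      {a : D | ∃ x y : D, a = pv x y - pd x y ∨ a = sv x y - sd x y}) :
    ∀ a ∈ I, ∀ z : D,
      pv a z ∈ I ∧ pv z a ∈ I ∧ pd a z ∈ I ∧ pd z a ∈ I ∧
      sv a z ∈ I ∧ sv z a ∈ I ∧ sd a z ∈ I ∧ sd z a ∈ I := by
  have zeroL : ∀ f : D → D → D, IsBilin K f → ∀ w, f 0 w = 0 := by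
    intro f hf w
    have := hf.2.1 0 0 w
    simpa using this
  have zeroR : ∀ f : D → D → D, IsBilin K f → ∀ w, f w 0 = 0 := by
    intro f hf w
    have := hf.2.2.2 0 w 0
    simpa using this
  have subL : ∀ f : D → D → D, IsBilin K f → ∀ u v w, f (u - v) w = f u w - f v w := by
    intro f hf u v w
    rw [sub_eq_add_neg, ← neg_one_smul K v, hf.1, hf.2.1, neg_one_smul, ← sub_eq_add_neg]
  have subR : ∀ f : D → D → D, IsBilin K f → ∀ u v w, f w (u - v) = f w u - f w v := by
    intro f hf u v w
    rw [sub_eq_add_neg, ← neg_one_smul K v, hf.2.2.1, hf.2.2.2, neg_one_smul,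
      ← sub_eq_add_neg]
  have key : ∀ a ∈ I, ∀ z : D, pv a z = 0 ∧ pd z a = 0 ∧ sv a z = 0 ∧ sd z a = 0 := by
    intro a ha
    rw [hI] at ha
    induction ha using Submodule.span_induction with
    | mem a hmem =>
      obtain ⟨x, y, hxy | hxy⟩ := hmem
      · subst hxy; intro z
        refine ⟨?_, ?_, ?_, ?_⟩
        · rw [subL pv h.bil_pv, h.q1a, h.q1b, sub_self]
        · rw [subR pd h.bil_pd]
          have h1 := h.q7a z x y
          have h2 := h.q7d z x y
          rw [(h.bil_pd).2.2.1] at h1 h2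
          have h3 : pd z (pv x y) + pd z (sv x y)
              = pd z (pd x y) + pd z (sv x y) := h1.symm.trans h2
          rw [add_right_cancel h3, sub_self]
        · rw [subL sv h.bil_sv]
          have h1 := h.q3a x y z
          have h2 := h.q3d x y z
          rw [(h.bil_sv).1] at h1 h2
          have h3 : sv (pv x y) z + sv (sv x y) z
              = sv (pd x y) z + sv (sv x y) z := h1.symm.trans h2
          rw [add_right_cancel h3, sub_self]
        · rw [subR sd h.bil_sd, ← h.q8a, ← h.q8b, sub_self]
      · subst hxy; intro z
        refine ⟨?_, ?_, ?_, ?_⟩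
        · rw [subL pv h.bil_pv, h.q2a, h.q2b, sub_self]
        · rw [subR pd h.bil_pd]
          have h1 := h.q7a z x y
          have h2 := h.q7c z x y
          rw [(h.bil_pd).2.2.1] at h1 h2
          have h3 : pd z (pv x y) + pd z (sv x y)
              = pd z (pv x y) + pd z (sd x y) := h1.symm.trans h2
          rw [add_left_cancel h3, sub_self]
        · rw [subL sv h.bil_sv]
          have h1 := h.q3a x y z
          have h2 := h.q3c x y z
          rw [(h.bil_sv).1] at h1 h2
          have h3 : sv (pv x y) z + sv (sv x y) z
              = sv (pv x y) z + sv (sd x y) z := h1.symm.trans h2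
          rw [add_left_cancel h3, sub_self]
        · rw [subR sd h.bil_sd, h.q9a, sub_self]
    | zero =>
      intro z
      exact ⟨zeroL pv h.bil_pv z, zeroR pd h.bil_pd z,
        zeroL sv h.bil_sv z, zeroR sd h.bil_sd z⟩
    | add u v _ _ hu hv =>
      intro z
      obtain ⟨hu1, hu2, hu3, hu4⟩ := hu z
      obtain ⟨hv1, hv2, hv3, hv4⟩ := hv z
      refine ⟨?_, ?_, ?_, ?_⟩
      · rw [(h.bil_pv).1, hu1, hv1, add_zero]
      · rw [(h.bil_pd).2.2.1, hu2, hv2, add_zero]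
      · rw [(h.bil_sv).1, hu3, hv3, add_zero]
      · rw [(h.bil_sd).2.2.1, hu4, hv4, add_zero]
    | smul c u _ hu =>
      intro z
      obtain ⟨hu1, hu2, hu3, hu4⟩ := hu z
      refine ⟨?_, ?_, ?_, ?_⟩
      · rw [(h.bil_pv).2.1, hu1, smul_zero]
      · rw [(h.bil_pd).2.2.2, hu2, smul_zero]
      · rw [(h.bil_sv).2.1, hu3, smul_zero]
      · rw [(h.bil_sd).2.2.2, hu4, smul_zero]
  intro a ha z
  obtain ⟨h1, h2, h3, h4⟩ := key a ha z
  have genP : ∀ u v : D, pv u v - pd u v ∈ I := by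
    intro u v; rw [hI]; exact Submodule.subset_span ⟨u, v, Or.inl rfl⟩
  have genS : ∀ u v : D, sv u v - sd u v ∈ I := by
    intro u v; rw [hI]; exact Submodule.subset_span ⟨u, v, Or.inr rfl⟩
  refine ⟨by rw [h1]; exact I.zero_mem, ?_, ?_, by rw [h2]; exact I.zero_mem,
    by rw [h3]; exact I.zero_mem, ?_, ?_, by rw [h4]; exact I.zero_mem⟩
  · have hg := genP z a
    rwa [h2, sub_zero] at hg
  · have hg := I.neg_mem (genP a z)
    rwa [h1, zero_sub, neg_neg] at hg
  · have hg := genS z a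
    rwa [h4, sub_zero] at hg
  · have hg := I.neg_mem (genS a z)
    rwa [h3, zero_sub, neg_neg] at hg
end

section
/- Let (D, ≺, ≻) be a dendriform algebra equipped with a linear map d : D → D satisfying d(x≺y) = d(x)≺y + x≺d(y), d(x≻y) = d(x)≻y + x≻d(y) and d² = 0 (a differential dendriform algebra). Define x≺⊢y = d(x)≺y, x≺⊣y = x≺d(y), x≻⊢y = d(x)≻y and x≻⊣y = x≻d(y). Then (D, ≺⊢, ≺⊣, ≻⊢, ≻⊣) is a quadri-dendriform algebra. -/
theorem stmt_3 (K : Type*) [Field K] [CharZero K]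
    (D : Type*) [AddCommGroup D] [Module K D]
    (p s : D → D → D) (hD : IsDendriform K D p s)
    (d : D →ₗ[K] D)
    (hd1 : ∀ x y, d (p x y) = p (d x) y + p x (d y))
    (hd2 : ∀ x y, d (s x y) = s (d x) y + s x (d y))
    (hd3 : ∀ x, d (d x) = 0) :
    IsQuadriDendriform K D
      (fun x y => p (d x) y) (fun x y => p x (d y))
      (fun x y => s (d x) y) (fun x y => s x (d y)) := by
  obtain ⟨p1, p2, p3, p4⟩ := hD.bil_p
  obtain ⟨s1, s2, s3, s4⟩ := hD.bil_s
  have pz1 : ∀ b, p 0 b = 0 := fun b => by simpa using p2 0 0 b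
  have sz1 : ∀ b, s 0 b = 0 := fun b => by simpa using s2 0 0 b
  have dpl : ∀ x y, d (p (d x) y) = p (d x) (d y) := by
    intro x y; rw [hd1, hd3, pz1, zero_add]
  have dpr : ∀ x y, d (p x (d y)) = p (d x) (d y) := by
    intro x y
    rw [hd1, hd3]
    have : p x (0 : D) = 0 := by simpa using p4 0 x 0
    rw [this, add_zero]
  have dsl : ∀ x y, d (s (d x) y) = s (d x) (d y) := by
    intro x y; rw [hd2, hd3, sz1, zero_add]
  have dsr : ∀ x y, d (s x (d y)) = s (d x) (d y) := by
    intro x y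
    rw [hd2, hd3]
    have : s x (0 : D) = 0 := by simpa using s4 0 x 0
    rw [this, add_zero]
  refine ⟨?_, ?_, ?_, ?_, ?_, ?_, ?_, ?_, ?_, ?_, ?_, ?_, ?_, ?_, ?_,
    ?_, ?_, ?_, ?_, ?_, ?_, ?_, ?_⟩
  · exact ⟨fun a a' b => by simp only [map_add, p1],
      fun c a b => by simp only [map_smul, p2],
      fun a b b' => p3 _ _ _, fun c a b => p4 _ _ _⟩
  · exact ⟨fun a a' b => p1 _ _ _, fun c a b => p2 _ _ _,
      fun a b b' => by simp only [map_add, p3],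
      fun c a b => by simp only [map_smul, p4]⟩
  · exact ⟨fun a a' b => by simp only [map_add, s1],
      fun c a b => by simp only [map_smul, s2],
      fun a b b' => s3 _ _ _, fun c a b => s4 _ _ _⟩
  · exact ⟨fun a a' b => s1 _ _ _, fun c a b => s2 _ _ _,
      fun a b b' => by simp only [map_add, s3],
      fun c a b => by simp only [map_smul, s4]⟩
  · intro x y z; simp only [dpl]; exact hD.d1 _ _ _
  · intro x y z; simp only [dpr]; exact hD.d1 _ _ _
  · intro x y z; simp only [dsl]; exact hD.d2 _ _ _
  · intro x y z; simp only [dsr]; exact hD.d2 _ _ _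
  · intro x y z; simp only [map_add, dpl, dsl]; exact hD.d3 _ _ _
  · intro x y z; simp only [map_add, dpr, dsr]; exact hD.d3 _ _ _
  · intro x y z; simp only [map_add, dpl, dsr]; exact hD.d3 _ _ _
  · intro x y z; simp only [map_add, dpr, dsl]; exact hD.d3 _ _ _
  · intro x y z; exact hD.d1 _ _ _
  · intro x y z; exact hD.d2 _ _ _
  · intro x y z; exact hD.d3 _ _ _
  · intro x y z; simp only [map_add, dpl, dsl]; exact hD.d1 _ _ _
  · intro x y z; simp only [map_add, dpr, dsr]; exact hD.d1 _ _ _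
  · intro x y z; simp only [map_add, dpl, dsr]; exact hD.d1 _ _ _
  · intro x y z; simp only [map_add, dpr, dsl]; exact hD.d1 _ _ _
  · intro x y z; simp only [dpl]; exact hD.d2 _ _ _
  · intro x y z; simp only [dpr]; exact hD.d2 _ _ _
  · intro x y z; simp only [dsl, dsr]
  · intro x y z; simp only [dsr]; exact hD.d3 _ _ _
end

section
/- Let (D, ≺, ≻) be a dendriform algebra, let (V; ≺ₗ, ≻ₗ, ≺ᵣ, ≻ᵣ) be a representation of D, and let f : V → D be a linear map that is a morphism of D-representations to the adjoint representation, i.e. f(x≺ₗu) = x≺f(u), f(x≻ₗu) = x≻f(u), f(u≺ᵣx) = f(u)≺x and f(u≻ᵣx) = f(u)≻x for all x ∈ D, u ∈ V. Then V with the operations u≺⊢v = f(u)≺ₗv, u≻⊢v = f(u)≻ₗv, u≺⊣v = u≺ᵣf(v) and u≻⊣v = u≻ᵣf(v) is a quadri-dendriform algebra. -/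
theorem stmt_4 (K : Type*) [Field K] [CharZero K]
    (D : Type*) [AddCommGroup D] [Module K D]
    (V : Type*) [AddCommGroup V] [Module K V]
    (p s : D → D → D) (pl sl : D → V → V) (pr sr : V → D → V)
    (hD : IsDendriform K D p s)
    (hV : IsDendRep K D V p s pl sl pr sr)
    (f : V →ₗ[K] D)
    (hf1 : ∀ x u, f (pl x u) = p x (f u))
    (hf2 : ∀ x u, f (sl x u) = s x (f u))
    (hf3 : ∀ u x, f (pr u x) = p (f u) x)
    (hf4 : ∀ u x, f (sr u x) = s (f u) x) :
    IsQuadriDendriform K V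
      (fun u v => pl (f u) v) (fun u v => pr u (f v))
      (fun u v => sl (f u) v) (fun u v => sr u (f v)) := by
  obtain ⟨pl1, pl2, pl3, pl4⟩ := hV.bil_pl
  obtain ⟨sl1, sl2, sl3, sl4⟩ := hV.bil_sl
  obtain ⟨pr1, pr2, pr3, pr4⟩ := hV.bil_pr
  obtain ⟨sr1, sr2, sr3, sr4⟩ := hV.bil_sr
  constructor
  · exact ⟨fun a a' b => by simp [map_add, pl1], fun c a b => by simp [map_smul, pl2],
      fun a b b' => by simp [pl3], fun c a b => by simp [pl4]⟩
  · exact ⟨fun a a' b => by simp [pr1], fun c a b => by simp [pr2],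
      fun a b b' => by simp [map_add, pr3], fun c a b => by simp [map_smul, pr4]⟩
  · exact ⟨fun a a' b => by simp [map_add, sl1], fun c a b => by simp [map_smul, sl2],
      fun a b b' => by simp [sl3], fun c a b => by simp [sl4]⟩
  · exact ⟨fun a a' b => by simp [sr1], fun c a b => by simp [sr2],
      fun a b b' => by simp [map_add, sr3], fun c a b => by simp [map_smul, sr4]⟩
  all_goals intro x y z
  · rw [hf1, hV.r1]
  · rw [hf3, hV.r1]
  · rw [hf2, hV.r2]
  · rw [hf4, hV.r2]
  · rw [hV.r3, map_add, hf1, hf2]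
  · rw [hV.r3, map_add, hf3, hf4]
  · rw [hV.r3, map_add, hf1, hf4]
  · rw [hV.r3, map_add, hf3, hf2]
  · rw [hV.r4]
  · rw [hV.r5]
  · rw [hV.r6]
  · rw [hV.r7, ← hf1, ← hf2, ← map_add]
  · rw [hV.r7, ← hf3, ← hf4, ← map_add]
  · rw [hV.r7, ← hf1, ← hf4, ← map_add]
  · rw [hV.r7, ← hf3, ← hf2, ← map_add]
  · rw [hV.r8, ← hf1]
  · rw [hV.r8, ← hf3]
  · rw [hf2, hf4]
  · rw [hf4, hV.r9]
end

section
/- Let (V; ≺ₗ, ≻ₗ, ≺ᵣ, ≻ᵣ) be a representation of a dendriform algebra (D, ≺, ≻). Then D ⊕ V equipped with the hemisemidirect product operations (x,u)≺⊢(y,v) = (x≺y, x≺ₗv), (x,u)≺⊣(y,v) = (x≺y, u≺ᵣy), (x,u)≻⊢(y,v) = (x≻y, x≻ₗv), (x,u)≻⊣(y,v) = (x≻y, u≻ᵣy) is a quadri-dendriform algebra. -/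
theorem stmt_5 (K : Type*) [Field K] [CharZero K]
    (D : Type*) [AddCommGroup D] [Module K D]
    (V : Type*) [AddCommGroup V] [Module K V]
    (p s : D → D → D) (pl sl : D → V → V) (pr sr : V → D → V)
    (hD : IsDendriform K D p s)
    (hV : IsDendRep K D V p s pl sl pr sr) :
    IsQuadriDendriform K (D × V)
      (fun a b => (p a.1 b.1, pl a.1 b.2))
      (fun a b => (p a.1 b.1, pr a.2 b.1))
      (fun a b => (s a.1 b.1, sl a.1 b.2))
      (fun a b => (s a.1 b.1, sr a.2 b.1)) := by
  obtain ⟨⟨p1,p2,p3,p4⟩, ⟨s1,s2,s3,s4⟩, d1, d2, d3⟩ := hD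
  obtain ⟨⟨a1,a2,a3,a4⟩, ⟨b1,b2,b3,b4⟩, ⟨c1,c2,c3,c4⟩, ⟨e1,e2,e3,e4⟩,
    r1, r2, r3, r4, r5, r6, r7, r8, r9⟩ := hV
  constructor <;>
    first
      | (intro x y z; refine Prod.ext ?_ ?_ <;>
          simp [d1, d2, d3, r1, r2, r3, r4, r5, r6, r7, r8, r9])
      | (refine ⟨?_, ?_, ?_, ?_⟩ <;> intros <;> refine Prod.ext ?_ ?_ <;>
          simp [p1,p2,p3,p4,s1,s2,s3,s4,a1,a2,a3,a4,b1,b2,b3,b4,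
            c1,c2,c3,c4,e1,e2,e3,e4])
end

section
/- Let (D, ≺, ≻) be a dendriform algebra, let (V; ≺ₗ, ≻ₗ, ≺ᵣ, ≻ᵣ) be a representation of D, and let T : V → D be a linear map. Then T is a relative averaging operator on D with respect to V if and only if the graph Gr(T) = {(Tu, u) : u ∈ V} is closed under the four hemisemidirect product operations on D ⊕ V, i.e. Gr(T) is a subalgebra of the hemisemidirect product quadri-dendriform algebra D ⊕ V. -/
theorem stmt_8 (K : Type*) [Field K] [CharZero K]
    (D : Type*) [AddCommGroup D] [Module K D]
    (V : Type*) [AddCommGroup V] [Module K V]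
    (p s : D → D → D) (pl sl : D → V → V) (pr sr : V → D → V)
    (hD : IsDendriform K D p s)
    (hV : IsDendRep K D V p s pl sl pr sr)
    (T : V →ₗ[K] D) :
    IsRelAveraging K D V p s pl sl pr sr T ↔
      (∀ a ∈ Set.range (fun u : V => ((T u, u) : D × V)),
       ∀ b ∈ Set.range (fun u : V => ((T u, u) : D × V)),
        ((p a.1 b.1, pl a.1 b.2) : D × V) ∈ Set.range (fun u : V => ((T u, u) : D × V)) ∧
        ((p a.1 b.1, pr a.2 b.1) : D × V) ∈ Set.range (fun u : V => ((T u, u) : D × V)) ∧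
        ((s a.1 b.1, sl a.1 b.2) : D × V) ∈ Set.range (fun u : V => ((T u, u) : D × V)) ∧
        ((s a.1 b.1, sr a.2 b.1) : D × V) ∈ Set.range (fun u : V => ((T u, u) : D × V))) := by
  constructor
  · rintro h a ⟨u, rfl⟩ b ⟨v, rfl⟩
    obtain ⟨h1, h2, h3, h4⟩ := h u v
    exact ⟨⟨pl (T u) v, by simp [← h1]⟩, ⟨pr u (T v), by simp [← h2]⟩,
      ⟨sl (T u) v, by simp [← h3]⟩, ⟨sr u (T v), by simp [← h4]⟩⟩
  · intro h u v
    obtain ⟨⟨w1, hw1⟩, ⟨w2, hw2⟩, ⟨w3, hw3⟩, ⟨w4, hw4⟩⟩ :=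
      h (T u, u) ⟨u, rfl⟩ (T v, v) ⟨v, rfl⟩
    simp only [Prod.mk.injEq] at hw1 hw2 hw3 hw4
    refine ⟨?_, ?_, ?_, ?_⟩
    · rw [← hw1.2, hw1.1]
    · rw [← hw2.2, hw2.1]
    · rw [← hw3.2, hw3.1]
    · rw [← hw4.2, hw4.1]
end

section
/- Let T : V → D be a relative averaging operator on a dendriform algebra (D, ≺, ≻) with respect to a representation (V; ≺ₗ, ≻ₗ, ≺ᵣ, ≻ᵣ). Then V with the operations u ≺⊢ᵀ v = Tu≺ₗv, u ≺⊣ᵀ v = u≺ᵣTv, u ≻⊢ᵀ v = Tu≻ₗv, u ≻⊣ᵀ v = u≻ᵣTv is a quadri-dendriform algebra; moreover T is a homomorphism from this quadri-dendriform algebra to the dendriform algebra (D, ≺, ≻), in the sense that T(u ≺⊢ᵀ v) = T(u ≺⊣ᵀ v) = Tu ≺ Tv and T(u ≻⊢ᵀ v) = T(u ≻⊣ᵀ v) = Tu ≻ Tv for all u, v ∈ V. -/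
theorem stmt_9 (K : Type*) [Field K] [CharZero K]
    (D : Type*) [AddCommGroup D] [Module K D]
    (V : Type*) [AddCommGroup V] [Module K V]
    (p s : D → D → D) (pl sl : D → V → V) (pr sr : V → D → V)
    (hD : IsDendriform K D p s)
    (hV : IsDendRep K D V p s pl sl pr sr)
    (T : V →ₗ[K] D)
    (hT : IsRelAveraging K D V p s pl sl pr sr T) :
    IsQuadriDendriform K V
      (fun u v => pl (T u) v) (fun u v => pr u (T v))
      (fun u v => sl (T u) v) (fun u v => sr u (T v)) ∧
    ∀ u v : V,
      T (pl (T u) v) = p (T u) (T v) ∧ T (pr u (T v)) = p (T u) (T v) ∧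
      T (sl (T u) v) = s (T u) (T v) ∧ T (sr u (T v)) = s (T u) (T v) := by
  obtain ⟨pl1, pl2, pl3, pl4⟩ := hV.bil_pl
  obtain ⟨sl1, sl2, sl3, sl4⟩ := hV.bil_sl
  obtain ⟨pr1, pr2, pr3, pr4⟩ := hV.bil_pr
  obtain ⟨sr1, sr2, sr3, sr4⟩ := hV.bil_sr
  refine ⟨?_, fun u v => ⟨((hT u v).1).symm, ((hT u v).2.1).symm,
    ((hT u v).2.2.1).symm, ((hT u v).2.2.2).symm⟩⟩
  refine
    { bil_pv := ⟨fun a a' b => by simp only [map_add, pl1], fun c a b => by simp only [map_smul, pl2],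
        fun a b b' => pl3 _ _ _, fun c a b => pl4 c _ _⟩
      bil_pd := ⟨fun a a' b => pr1 _ _ _, fun c a b => pr2 c _ _,
        fun a b b' => by simp only [map_add, pr3], fun c a b => by simp only [map_smul, pr4]⟩
      bil_sv := ⟨fun a a' b => by simp only [map_add, sl1], fun c a b => by simp only [map_smul, sl2],
        fun a b b' => sl3 _ _ _, fun c a b => sl4 c _ _⟩
      bil_sd := ⟨fun a a' b => sr1 _ _ _, fun c a b => sr2 c _ _,
        fun a b b' => by simp only [map_add, sr3], fun c a b => by simp only [map_smul, sr4]⟩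
      q1a := fun x y z => by rw [← (hT x y).1, hV.r1]
      q1b := fun x y z => by rw [← (hT x y).2.1, hV.r1]
      q2a := fun x y z => by rw [← (hT x y).2.2.1, hV.r2]
      q2b := fun x y z => by rw [← (hT x y).2.2.2, hV.r2]
      q3a := fun x y z => by rw [hV.r3, map_add, ← (hT x y).1, ← (hT x y).2.2.1]
      q3b := fun x y z => by rw [hV.r3, map_add, ← (hT x y).2.1, ← (hT x y).2.2.2]
      q3c := fun x y z => by rw [hV.r3, map_add, ← (hT x y).1, ← (hT x y).2.2.2]
      q3d := fun x y z => by rw [hV.r3, map_add, ← (hT x y).2.1, ← (hT x y).2.2.1]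
      q4 := fun x y z => hV.r4 _ _ _
      q5 := fun x y z => hV.r5 _ _ _
      q6 := fun x y z => by rw [hV.r6]
      q7a := fun x y z => by rw [hV.r7, map_add, ← (hT y z).1, ← (hT y z).2.2.1]
      q7b := fun x y z => by rw [hV.r7, map_add, ← (hT y z).2.1, ← (hT y z).2.2.2]
      q7c := fun x y z => by rw [hV.r7, map_add, ← (hT y z).1, ← (hT y z).2.2.2]
      q7d := fun x y z => by rw [hV.r7, map_add, ← (hT y z).2.1, ← (hT y z).2.2.1]
      q8a := fun x y z => by rw [hV.r8, (hT y z).1]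
      q8b := fun x y z => by rw [hV.r8, (hT y z).2.1]
      q9a := fun x y z => by rw [← (hT y z).2.2.1, (hT y z).2.2.2]
      q9b := fun x y z => by rw [← (hT y z).2.2.2, hV.r9] }
end

section
/- Let (D, ≺, ≻) be a dendriform algebra and T : D → D an averaging operator. Then D with the operations x ≺⊢ᵀ y = Tx≺y, x ≺⊣ᵀ y = x≺Ty, x ≻⊢ᵀ y = Tx≻y, x ≻⊣ᵀ y = x≻Ty is a quadri-dendriform algebra. -/
theorem stmt_10 (K : Type*) [Field K] [CharZero K]
    (D : Type*) [AddCommGroup D] [Module K D]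
    (p s : D → D → D) (hD : IsDendriform K D p s)
    (T : D →ₗ[K] D) (hT : IsAveraging K D p s T) :
    IsQuadriDendriform K D
      (fun x y => p (T x) y) (fun x y => p x (T y))
      (fun x y => s (T x) y) (fun x y => s x (T y)) := by

  obtain ⟨⟨pL, pLs, pR, pRs⟩, ⟨sL, sLs, sR, sRs⟩, d1, d2, d3⟩ := hD
  have h1 : ∀ x y, p (T x) (T y) = T (p (T x) y) := fun x y => (hT x y).1
  have h2 : ∀ x y, p (T x) (T y) = T (p x (T y)) := fun x y => (hT x y).2.1
  have h3 : ∀ x y, s (T x) (T y) = T (s (T x) y) := fun x y => (hT x y).2.2.1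
  have h4 : ∀ x y, s (T x) (T y) = T (s x (T y)) := fun x y => (hT x y).2.2.2
  refine
    { bil_pv := ⟨fun a a' b => by beta_reduce; rw [map_add, pL], fun c a b => by beta_reduce; rw [map_smul, pLs],
        fun a b b' => pR _ _ _, fun c a b => pRs _ _ _⟩
      bil_pd := ⟨fun a a' b => pL _ _ _, fun c a b => pLs _ _ _,
        fun a b b' => by beta_reduce; rw [map_add, pR], fun c a b => by beta_reduce; rw [map_smul, pRs]⟩
      bil_sv := ⟨fun a a' b => by beta_reduce; rw [map_add, sL], fun c a b => by beta_reduce; rw [map_smul, sLs],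
        fun a b b' => sR _ _ _, fun c a b => sRs _ _ _⟩
      bil_sd := ⟨fun a a' b => sL _ _ _, fun c a b => sLs _ _ _,
        fun a b b' => by beta_reduce; rw [map_add, sR], fun c a b => by beta_reduce; rw [map_smul, sRs]⟩
      q1a := fun x y z => by beta_reduce; rw [← h1, d1]
      q1b := fun x y z => by beta_reduce; rw [← h2, d1]
      q2a := fun x y z => by beta_reduce; rw [← h3, d2]
      q2b := fun x y z => by beta_reduce; rw [← h4, d2]
      q3a := fun x y z => by beta_reduce; rw [d3, map_add, ← h1, ← h3]
      q3b := fun x y z => by beta_reduce; rw [d3, map_add, ← h2, ← h4]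
      q3c := fun x y z => by beta_reduce; rw [d3, map_add, ← h1, ← h4]
      q3d := fun x y z => by beta_reduce; rw [d3, map_add, ← h2, ← h3]
      q4 := fun x y z => d1 (T x) y (T z)
      q5 := fun x y z => d2 (T x) y (T z)
      q6 := fun x y z => d3 (T x) y (T z)
      q7a := fun x y z => by beta_reduce; rw [d1, map_add, ← h1, ← h3]
      q7b := fun x y z => by beta_reduce; rw [d1, map_add, ← h2, ← h4]
      q7c := fun x y z => by beta_reduce; rw [d1, map_add, ← h1, ← h4]
      q7d := fun x y z => by beta_reduce; rw [d1, map_add, ← h2, ← h3]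
      q8a := fun x y z => by beta_reduce; rw [d2, h1]
      q8b := fun x y z => by beta_reduce; rw [d2, h2]
      q9a := fun x y z => by beta_reduce; rw [← h3, h4]
      q9b := fun x y z => by beta_reduce; rw [← h4, d3] }
end

section
/- Let (D, ≺⊢, ≺⊣, ≻⊢, ≻⊣) be a quadri-dendriform algebra, let I_D be the linear span of { x≺⊢y − x≺⊣y, x≻⊢y − x≻⊣y : x, y ∈ D }, let D̄ = D/I_D be the quotient vector space and π : D → D̄ the quotient map. Then there are unique bilinear operations ≺, ≻ on D̄ with π(x) ≺ π(y) = π(x≺⊢y) = π(x≺⊣y) and π(x) ≻ π(y) = π(x≻⊢y) = π(x≻⊣y) for all x, y ∈ D, and (D̄, ≺, ≻) is a dendriform algebra; moreover the rules π(x) ≺ₗ y = x≺⊢y, π(x) ≻ₗ y = x≻⊢y, y ≺ᵣ π(x) = y≺⊣x, y ≻ᵣ π(x) = y≻⊣x give well-defined bilinear maps D̄ × D → D and D × D̄ → D that make D a representation of the dendriform algebra D̄. -/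
section QDAux
set_option linter.unusedSectionVars false

variable {K : Type*} [Field K] [CharZero K]

lemma IsBilin.zero_left {A B C : Type*}
    [AddCommGroup A] [Module K A] [AddCommGroup B] [Module K B]
    [AddCommGroup C] [Module K C] {f : A → B → C} (hf : IsBilin K f) (b : B) :
    f 0 b = 0 := by
  have := hf.1 0 0 b
  rw [add_zero] at this
  exact left_eq_add.mp this

lemma IsBilin.zero_right {A B C : Type*}
    [AddCommGroup A] [Module K A] [AddCommGroup B] [Module K B]
    [AddCommGroup C] [Module K C] {f : A → B → C} (hf : IsBilin K f) (a : A) :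
    f a 0 = 0 := by
  have := hf.2.2.1 a 0 0
  rw [add_zero] at this
  exact left_eq_add.mp this

lemma IsBilin.sub_left {A B C : Type*}
    [AddCommGroup A] [Module K A] [AddCommGroup B] [Module K B]
    [AddCommGroup C] [Module K C] {f : A → B → C} (hf : IsBilin K f)
    (a a' : A) (b : B) : f (a - a') b = f a b - f a' b := by
  have := hf.1 (a - a') a' b
  rw [sub_add_cancel] at this
  rw [this]; abel

lemma IsBilin.sub_right {A B C : Type*}
    [AddCommGroup A] [Module K A] [AddCommGroup B] [Module K B]
    [AddCommGroup C] [Module K C] {f : A → B → C} (hf : IsBilin K f)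
    (a : A) (b b' : B) : f a (b - b') = f a b - f a b' := by
  have := hf.2.2.1 a (b - b') b'
  rw [sub_add_cancel] at this
  rw [this]; abel

variable {D : Type*} [AddCommGroup D] [Module K D]
  {pv pd sv sd : D → D → D}
  (h : IsQuadriDendriform K D pv pd sv sd)
  {I : Submodule K D}
  (hI : I = Submodule.span K
      {a : D | ∃ x y : D, a = pv x y - pd x y ∨ a = sv x y - sd x y})

include h hI

lemma qd_memI_p (x y : D) : pv x y - pd x y ∈ I := by
  rw [hI]; exact Submodule.subset_span ⟨x, y, Or.inl rfl⟩

lemma qd_memI_s (x y : D) : sv x y - sd x y ∈ I := by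
  rw [hI]; exact Submodule.subset_span ⟨x, y, Or.inr rfl⟩

lemma qd_pv_left_zero {i : D} (hi : i ∈ I) (y : D) : pv i y = 0 := by
  rw [hI] at hi
  induction hi using Submodule.span_induction with
  | mem a ha =>
    obtain ⟨u, v, hc | hc⟩ := ha <;> subst hc
    · rw [h.bil_pv.sub_left, h.q1a, h.q1b, sub_self]
    · rw [h.bil_pv.sub_left, h.q2a, h.q2b, sub_self]
  | zero => exact h.bil_pv.zero_left y
  | add a b _ _ ha hb => rw [h.bil_pv.1, ha, hb, add_zero]
  | smul c a _ ha => rw [h.bil_pv.2.1, ha, smul_zero]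

lemma qd_sv_left_zero {i : D} (hi : i ∈ I) (y : D) : sv i y = 0 := by
  rw [hI] at hi
  induction hi using Submodule.span_induction with
  | mem a ha =>
    obtain ⟨u, v, hc | hc⟩ := ha <;> subst hc
    · rw [h.bil_sv.sub_left]
      have e1 := h.q3a u v y
      have e2 := h.q3d u v y
      rw [h.bil_sv.1] at e1 e2
      have := e1.symm.trans e2
      rw [sub_eq_zero]
      exact add_right_cancel this
    · rw [h.bil_sv.sub_left]
      have e1 := h.q3a u v y
      have e2 := h.q3c u v y
      rw [h.bil_sv.1] at e1 e2
      have := e1.symm.trans e2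
      rw [sub_eq_zero]
      exact add_left_cancel this
  | zero => exact h.bil_sv.zero_left y
  | add a b _ _ ha hb => rw [h.bil_sv.1, ha, hb, add_zero]
  | smul c a _ ha => rw [h.bil_sv.2.1, ha, smul_zero]

lemma qd_pd_right_zero (x : D) {i : D} (hi : i ∈ I) : pd x i = 0 := by
  rw [hI] at hi
  induction hi using Submodule.span_induction with
  | mem a ha =>
    obtain ⟨u, v, hc | hc⟩ := ha <;> subst hc
    · rw [h.bil_pd.sub_right]
      have e1 := h.q7a x u v
      have e2 := h.q7d x u v
      rw [h.bil_pd.2.2.1] at e1 e2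
      have := e1.symm.trans e2
      rw [sub_eq_zero]
      exact add_right_cancel this
    · rw [h.bil_pd.sub_right]
      have e1 := h.q7a x u v
      have e2 := h.q7c x u v
      rw [h.bil_pd.2.2.1] at e1 e2
      have := e1.symm.trans e2
      rw [sub_eq_zero]
      exact add_left_cancel this
  | zero => exact h.bil_pd.zero_right x
  | add a b _ _ ha hb => rw [h.bil_pd.2.2.1, ha, hb, add_zero]
  | smul c a _ ha => rw [h.bil_pd.2.2.2, ha, smul_zero]

lemma qd_sd_right_zero (x : D) {i : D} (hi : i ∈ I) : sd x i = 0 := by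
  rw [hI] at hi
  induction hi using Submodule.span_induction with
  | mem a ha =>
    obtain ⟨u, v, hc | hc⟩ := ha <;> subst hc
    · rw [h.bil_sd.sub_right, (h.q8a x u v).symm.trans (h.q8b x u v), sub_self]
    · rw [h.bil_sd.sub_right, h.q9a, sub_self]
  | zero => exact h.bil_sd.zero_right x
  | add a b _ _ ha hb => rw [h.bil_sd.2.2.1, ha, hb, add_zero]
  | smul c a _ ha => rw [h.bil_sd.2.2.2, ha, smul_zero]

lemma qd_pv_right_mem (x : D) {i : D} (hi : i ∈ I) : pv x i ∈ I := by
  have h1 := qd_memI_p h hI x i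
  rwa [qd_pd_right_zero h hI x hi, sub_zero] at h1

lemma qd_sv_right_mem (x : D) {i : D} (hi : i ∈ I) : sv x i ∈ I := by
  have h1 := qd_memI_s h hI x i
  rwa [qd_sd_right_zero h hI x hi, sub_zero] at h1

lemma qd_bilin_quot (o : D → D → D) (F : (D ⧸ I) → (D ⧸ I) → (D ⧸ I))
    (hb : IsBilin K o)
    (hF : ∀ x y : D, F (I.mkQ x) (I.mkQ y) = I.mkQ (o x y)) : IsBilin K F := by
  refine ⟨?_, ?_, ?_, ?_⟩
  · intro a a' b
    obtain ⟨x, rfl⟩ := I.mkQ_surjective a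
    obtain ⟨x', rfl⟩ := I.mkQ_surjective a'
    obtain ⟨y, rfl⟩ := I.mkQ_surjective b
    rw [← map_add, hF, hF, hF, hb.1, map_add]
  · intro c a b
    obtain ⟨x, rfl⟩ := I.mkQ_surjective a
    obtain ⟨y, rfl⟩ := I.mkQ_surjective b
    rw [← map_smul, hF, hF, hb.2.1, map_smul]
  · intro a b b'
    obtain ⟨x, rfl⟩ := I.mkQ_surjective a
    obtain ⟨y, rfl⟩ := I.mkQ_surjective b
    obtain ⟨y', rfl⟩ := I.mkQ_surjective b'
    rw [← map_add, hF, hF, hF, hb.2.2.1, map_add]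
  · intro c a b
    obtain ⟨x, rfl⟩ := I.mkQ_surjective a
    obtain ⟨y, rfl⟩ := I.mkQ_surjective b
    rw [← map_smul, hF, hF, hb.2.2.2, map_smul]

lemma qd_dend (P S : (D ⧸ I) → (D ⧸ I) → (D ⧸ I))
    (hP : ∀ x y : D, P (I.mkQ x) (I.mkQ y) = I.mkQ (pv x y))
    (hS : ∀ x y : D, S (I.mkQ x) (I.mkQ y) = I.mkQ (sv x y)) :
    IsDendriform K (D ⧸ I) P S := by
  refine ⟨qd_bilin_quot h hI pv P h.bil_pv hP, qd_bilin_quot h hI sv S h.bil_sv hS, ?_, ?_, ?_⟩ <;>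
    · intro a b c
      obtain ⟨x, rfl⟩ := I.mkQ_surjective a
      obtain ⟨y, rfl⟩ := I.mkQ_surjective b
      obtain ⟨z, rfl⟩ := I.mkQ_surjective c
      first
      | rw [hP x y, hP (pv x y) z, hP y z, hS y z, ← map_add, hP x, h.q1a]
      | rw [hS x y, hP (sv x y) z, hP y z, hS x (pv y z), h.q2a]
      | rw [hS y z, hS x (sv y z), hP x y, hS x y, ← map_add, hS (pv x y + sv x y) z, h.q3a]

lemma qd_rep (P S : (D ⧸ I) → (D ⧸ I) → (D ⧸ I))
    (Pl Sl : (D ⧸ I) → D → D) (Pr Sr : D → (D ⧸ I) → D)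
    (hP : ∀ x y : D, P (I.mkQ x) (I.mkQ y) = I.mkQ (pv x y))
    (hS : ∀ x y : D, S (I.mkQ x) (I.mkQ y) = I.mkQ (sv x y))
    (hPl : ∀ x y : D, Pl (I.mkQ x) y = pv x y)
    (hSl : ∀ x y : D, Sl (I.mkQ x) y = sv x y)
    (hPr : ∀ y x : D, Pr y (I.mkQ x) = pd y x)
    (hSr : ∀ y x : D, Sr y (I.mkQ x) = sd y x) :
    IsDendRep K (D ⧸ I) D P S Pl Sl Pr Sr := by
  constructor
  case bil_pl =>
    refine ⟨?_, ?_, ?_, ?_⟩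
    · intro a a' b
      obtain ⟨x, rfl⟩ := I.mkQ_surjective a
      obtain ⟨x', rfl⟩ := I.mkQ_surjective a'
      rw [← map_add, hPl, hPl, hPl, h.bil_pv.1]
    · intro c a b
      obtain ⟨x, rfl⟩ := I.mkQ_surjective a
      rw [← map_smul, hPl, hPl, h.bil_pv.2.1]
    · intro a b b'
      obtain ⟨x, rfl⟩ := I.mkQ_surjective a
      rw [hPl, hPl, hPl, h.bil_pv.2.2.1]
    · intro c a b
      obtain ⟨x, rfl⟩ := I.mkQ_surjective a
      rw [hPl, hPl, h.bil_pv.2.2.2]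
  case bil_sl =>
    refine ⟨?_, ?_, ?_, ?_⟩
    · intro a a' b
      obtain ⟨x, rfl⟩ := I.mkQ_surjective a
      obtain ⟨x', rfl⟩ := I.mkQ_surjective a'
      rw [← map_add, hSl, hSl, hSl, h.bil_sv.1]
    · intro c a b
      obtain ⟨x, rfl⟩ := I.mkQ_surjective a
      rw [← map_smul, hSl, hSl, h.bil_sv.2.1]
    · intro a b b'
      obtain ⟨x, rfl⟩ := I.mkQ_surjective a
      rw [hSl, hSl, hSl, h.bil_sv.2.2.1]
    · intro c a b
      obtain ⟨x, rfl⟩ := I.mkQ_surjective a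
      rw [hSl, hSl, h.bil_sv.2.2.2]
  case bil_pr =>
    refine ⟨?_, ?_, ?_, ?_⟩
    · intro a a' b
      obtain ⟨x, rfl⟩ := I.mkQ_surjective b
      rw [hPr, hPr, hPr, h.bil_pd.1]
    · intro c a b
      obtain ⟨x, rfl⟩ := I.mkQ_surjective b
      rw [hPr, hPr, h.bil_pd.2.1]
    · intro a b b'
      obtain ⟨x, rfl⟩ := I.mkQ_surjective b
      obtain ⟨x', rfl⟩ := I.mkQ_surjective b'
      rw [← map_add, hPr, hPr, hPr, h.bil_pd.2.2.1]
    · intro c a b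
      obtain ⟨x, rfl⟩ := I.mkQ_surjective b
      rw [← map_smul, hPr, hPr, h.bil_pd.2.2.2]
  case bil_sr =>
    refine ⟨?_, ?_, ?_, ?_⟩
    · intro a a' b
      obtain ⟨x, rfl⟩ := I.mkQ_surjective b
      rw [hSr, hSr, hSr, h.bil_sd.1]
    · intro c a b
      obtain ⟨x, rfl⟩ := I.mkQ_surjective b
      rw [hSr, hSr, h.bil_sd.2.1]
    · intro a b b'
      obtain ⟨x, rfl⟩ := I.mkQ_surjective b
      obtain ⟨x', rfl⟩ := I.mkQ_surjective b'
      rw [← map_add, hSr, hSr, hSr, h.bil_sd.2.2.1]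
    · intro c a b
      obtain ⟨x, rfl⟩ := I.mkQ_surjective b
      rw [← map_smul, hSr, hSr, h.bil_sd.2.2.2]
  case r1 =>
    intro a b u
    obtain ⟨x, rfl⟩ := I.mkQ_surjective a
    obtain ⟨y, rfl⟩ := I.mkQ_surjective b
    rw [hP x y, hPl (pv x y) u, hPl y u, hSl y u, hPl x, h.q1a]
  case r2 =>
    intro a b u
    obtain ⟨x, rfl⟩ := I.mkQ_surjective a
    obtain ⟨y, rfl⟩ := I.mkQ_surjective b
    rw [hS x y, hPl (sv x y) u, hPl y u, hSl x (pv y u), h.q2a]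
  case r3 =>
    intro a b u
    obtain ⟨x, rfl⟩ := I.mkQ_surjective a
    obtain ⟨y, rfl⟩ := I.mkQ_surjective b
    rw [hSl y u, hSl x (sv y u), hP x y, hS x y, ← map_add,
      hSl (pv x y + sv x y) u, h.q3a]
  case r4 =>
    intro a u c
    obtain ⟨x, rfl⟩ := I.mkQ_surjective a
    obtain ⟨z, rfl⟩ := I.mkQ_surjective c
    rw [hPl x u, hPr (pv x u) z, hPr u z, hSr u z, hPl x, h.q4]
  case r5 =>
    intro a u c
    obtain ⟨x, rfl⟩ := I.mkQ_surjective a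
    obtain ⟨z, rfl⟩ := I.mkQ_surjective c
    rw [hSl x u, hPr (sv x u) z, hPr u z, hSl x (pd u z), h.q5]
  case r6 =>
    intro a u c
    obtain ⟨x, rfl⟩ := I.mkQ_surjective a
    obtain ⟨z, rfl⟩ := I.mkQ_surjective c
    rw [hSr u z, hSl x (sd u z), hPl x u, hSl x u, hSr (pv x u + sv x u) z, h.q6]
  case r7 =>
    intro u b c
    obtain ⟨y, rfl⟩ := I.mkQ_surjective b
    obtain ⟨z, rfl⟩ := I.mkQ_surjective c
    rw [hPr u y, hPr (pd u y) z, hP y z, hS y z, ← map_add,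
      hPr u (pv y z + sv y z), h.q7a]
  case r8 =>
    intro u b c
    obtain ⟨y, rfl⟩ := I.mkQ_surjective b
    obtain ⟨z, rfl⟩ := I.mkQ_surjective c
    rw [hSr u y, hPr (sd u y) z, hP y z, hSr u (pv y z), h.q8a]
  case r9 =>
    intro u b c
    obtain ⟨y, rfl⟩ := I.mkQ_surjective b
    obtain ⟨z, rfl⟩ := I.mkQ_surjective c
    rw [hS y z, hSr u (sv y z), hPr u y, hSr u y, hSr (pd u y + sd u y) z,
      h.q9a, h.q9b]

end QDAux


theorem stmt_11 (K : Type*) [Field K] [CharZero K]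
    (D : Type*) [AddCommGroup D] [Module K D]
    (pv pd sv sd : D → D → D)
    (h : IsQuadriDendriform K D pv pd sv sd)
    (I : Submodule K D)
    (hI : I = Submodule.span K
      {a : D | ∃ x y : D, a = pv x y - pd x y ∨ a = sv x y - sd x y}) :
    (∃! ps : ((D ⧸ I) → (D ⧸ I) → (D ⧸ I)) × ((D ⧸ I) → (D ⧸ I) → (D ⧸ I)),
        IsBilin K ps.1 ∧ IsBilin K ps.2 ∧
        (∀ x y : D, ps.1 (I.mkQ x) (I.mkQ y) = I.mkQ (pv x y)) ∧
        (∀ x y : D, ps.1 (I.mkQ x) (I.mkQ y) = I.mkQ (pd x y)) ∧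
        (∀ x y : D, ps.2 (I.mkQ x) (I.mkQ y) = I.mkQ (sv x y)) ∧
        (∀ x y : D, ps.2 (I.mkQ x) (I.mkQ y) = I.mkQ (sd x y))) ∧
    (∀ P S : (D ⧸ I) → (D ⧸ I) → (D ⧸ I),
      (∀ x y : D, P (I.mkQ x) (I.mkQ y) = I.mkQ (pv x y)) →
      (∀ x y : D, S (I.mkQ x) (I.mkQ y) = I.mkQ (sv x y)) →
      IsDendriform K (D ⧸ I) P S ∧
      ∃ (Pl Sl : (D ⧸ I) → D → D) (Pr Sr : D → (D ⧸ I) → D),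
        (∀ x y : D, Pl (I.mkQ x) y = pv x y) ∧
        (∀ x y : D, Sl (I.mkQ x) y = sv x y) ∧
        (∀ y x : D, Pr y (I.mkQ x) = pd y x) ∧
        (∀ y x : D, Sr y (I.mkQ x) = sd y x) ∧
        IsDendRep K (D ⧸ I) D P S Pl Sl Pr Sr) := by
  classical
  obtain ⟨sec, hsec⟩ : ∃ sec : (D ⧸ I) → D, ∀ a, I.mkQ (sec a) = a :=
    ⟨Function.surjInv I.mkQ_surjective, fun a => Function.surjInv_eq I.mkQ_surjective a⟩
  have hdiff : ∀ x : D, sec (I.mkQ x) - x ∈ I := fun x =>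
    (Submodule.Quotient.eq I).mp (hsec (I.mkQ x))
  have hmk : ∀ {a b : D}, a - b ∈ I → I.mkQ a = I.mkQ b := by
    intro a b hab
    rw [Submodule.mkQ_apply, Submodule.mkQ_apply]
    exact (Submodule.Quotient.eq I).mpr hab
  have hP0 : ∀ x y : D, I.mkQ (pv (sec (I.mkQ x)) (sec (I.mkQ y))) = I.mkQ (pv x y) := by
    intro x y
    apply hmk
    have e : pv (sec (I.mkQ x)) (sec (I.mkQ y)) - pv x y
        = pv (sec (I.mkQ x) - x) (sec (I.mkQ y)) + pv x (sec (I.mkQ y) - y) := by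
      rw [h.bil_pv.sub_left, h.bil_pv.sub_right]; abel
    rw [e, qd_pv_left_zero h hI (hdiff x), zero_add]
    exact qd_pv_right_mem h hI x (hdiff y)
  have hS0 : ∀ x y : D, I.mkQ (sv (sec (I.mkQ x)) (sec (I.mkQ y))) = I.mkQ (sv x y) := by
    intro x y
    apply hmk
    have e : sv (sec (I.mkQ x)) (sec (I.mkQ y)) - sv x y
        = sv (sec (I.mkQ x) - x) (sec (I.mkQ y)) + sv x (sec (I.mkQ y) - y) := by
      rw [h.bil_sv.sub_left, h.bil_sv.sub_right]; abel
    rw [e, qd_sv_left_zero h hI (hdiff x), zero_add]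
    exact qd_sv_right_mem h hI x (hdiff y)
  constructor
  · refine ⟨(fun a b => I.mkQ (pv (sec a) (sec b)), fun a b => I.mkQ (sv (sec a) (sec b))),
      ⟨qd_bilin_quot h hI pv _ h.bil_pv hP0, qd_bilin_quot h hI sv _ h.bil_sv hS0, hP0,
        fun x y => (hP0 x y).trans (hmk (qd_memI_p h hI x y)), hS0,
        fun x y => (hS0 x y).trans (hmk (qd_memI_s h hI x y))⟩, ?_⟩
    rintro ⟨Q1, Q2⟩ ⟨-, -, hq1, -, hq2, -⟩
    refine Prod.ext ?_ ?_ <;> funext a b <;>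
      obtain ⟨x, rfl⟩ := I.mkQ_surjective a <;>
      obtain ⟨y, rfl⟩ := I.mkQ_surjective b
    · exact (hq1 x y).trans (hP0 x y).symm
    · exact (hq2 x y).trans (hS0 x y).symm
  · intro P S hP hS
    have hPl : ∀ x y : D, pv (sec (I.mkQ x)) y = pv x y := by
      intro x y
      have e := h.bil_pv.sub_left (sec (I.mkQ x)) x y
      rw [qd_pv_left_zero h hI (hdiff x)] at e
      exact sub_eq_zero.mp e.symm
    have hSl : ∀ x y : D, sv (sec (I.mkQ x)) y = sv x y := by
      intro x y
      have e := h.bil_sv.sub_left (sec (I.mkQ x)) x y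
      rw [qd_sv_left_zero h hI (hdiff x)] at e
      exact sub_eq_zero.mp e.symm
    have hPr : ∀ y x : D, pd y (sec (I.mkQ x)) = pd y x := by
      intro y x
      have e := h.bil_pd.sub_right y (sec (I.mkQ x)) x
      rw [qd_pd_right_zero h hI y (hdiff x)] at e
      exact sub_eq_zero.mp e.symm
    have hSr : ∀ y x : D, sd y (sec (I.mkQ x)) = sd y x := by
      intro y x
      have e := h.bil_sd.sub_right y (sec (I.mkQ x)) x
      rw [qd_sd_right_zero h hI y (hdiff x)] at e
      exact sub_eq_zero.mp e.symm
    exact ⟨qd_dend h hI P S hP hS,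
      fun a y => pv (sec a) y, fun a y => sv (sec a) y,
      fun y a => pd y (sec a), fun y a => sd y (sec a),
      hPl, hSl, hPr, hSr,
      qd_rep h hI P S _ _ _ _ hP hS hPl hSl hPr hSr⟩
end

section
/- Let (D, ≺⊢, ≺⊣, ≻⊢, ≻⊣) be a quadri-dendriform algebra, let I_D be the linear span of { x≺⊢y − x≺⊣y, x≻⊢y − x≻⊣y : x, y ∈ D }, let D̄ = D/I_D carry the induced dendriform structure π(x) ≺ π(y) = π(x≺⊢y), π(x) ≻ π(y) = π(x≻⊢y), and let D be the representation of D̄ given by π(x) ≺ₗ y = x≺⊢y, π(x) ≻ₗ y = x≻⊢y, y ≺ᵣ π(x) = y≺⊣x, y ≻ᵣ π(x) = y≻⊣x. Then the quotient map π : D → D̄ is a relative averaging operator on the dendriform algebra D̄ with respect to this representation. -/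
theorem stmt_12 (K : Type*) [Field K] [CharZero K]
    (D : Type*) [AddCommGroup D] [Module K D]
    (pv pd sv sd : D → D → D)
    (h : IsQuadriDendriform K D pv pd sv sd)
    (I : Submodule K D)
    (hI : I = Submodule.span K
      {a : D | ∃ x y : D, a = pv x y - pd x y ∨ a = sv x y - sd x y})
    (P S : (D ⧸ I) → (D ⧸ I) → (D ⧸ I))
    (hP : ∀ x y : D, P (I.mkQ x) (I.mkQ y) = I.mkQ (pv x y))
    (hS : ∀ x y : D, S (I.mkQ x) (I.mkQ y) = I.mkQ (sv x y))
    (Pl Sl : (D ⧸ I) → D → D) (Pr Sr : D → (D ⧸ I) → D)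
    (hPl : ∀ x y : D, Pl (I.mkQ x) y = pv x y)
    (hSl : ∀ x y : D, Sl (I.mkQ x) y = sv x y)
    (hPr : ∀ y x : D, Pr y (I.mkQ x) = pd y x)
    (hSr : ∀ y x : D, Sr y (I.mkQ x) = sd y x) :
    IsRelAveraging K (D ⧸ I) D P S Pl Sl Pr Sr I.mkQ := by
  intro u v
  have hmem1 : pv u v - pd u v ∈ I := by
    rw [hI]; exact Submodule.subset_span ⟨u, v, Or.inl rfl⟩
  have hmem2 : sv u v - sd u v ∈ I := by
    rw [hI]; exact Submodule.subset_span ⟨u, v, Or.inr rfl⟩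
  refine ⟨?_, ?_, ?_, ?_⟩
  · rw [hP, hPl]
  · rw [hP, hPr]
    exact (Submodule.Quotient.eq I).mpr hmem1
  · rw [hS, hSl]
  · rw [hS, hSr]
    exact (Submodule.Quotient.eq I).mpr hmem2
end

section
/- Let (D, ≺, ≻) be a dendriform algebra, (V; ≺ₗ, ≻ₗ, ≺ᵣ, ≻ᵣ) a representation of D, and T : V → D a relative averaging operator. Equip D ⊕ V with the semidirect product dendriform structure (x,u) ≺⋉ (y,v) = (x≺y, x≺ₗv + u≺ᵣy), (x,u) ≻⋉ (y,v) = (x≻y, x≻ₗv + u≻ᵣy). Then the linear map T̂ : D ⊕ V → D ⊕ V defined by T̂(x,u) = (Tu, 0) is an averaging operator on the dendriform algebra (D ⊕ V, ≺⋉, ≻⋉). -/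
theorem stmt_13 (K : Type*) [Field K] [CharZero K]
    (D : Type*) [AddCommGroup D] [Module K D]
    (V : Type*) [AddCommGroup V] [Module K V]
    (p s : D → D → D) (pl sl : D → V → V) (pr sr : V → D → V)
    (hD : IsDendriform K D p s)
    (hV : IsDendRep K D V p s pl sl pr sr)
    (T : V →ₗ[K] D)
    (hT : IsRelAveraging K D V p s pl sl pr sr T) :
    IsAveraging K (D × V)
      (fun a b => (p a.1 b.1, pl a.1 b.2 + pr a.2 b.1))
      (fun a b => (s a.1 b.1, sl a.1 b.2 + sr a.2 b.1))
      ((LinearMap.inl K D V) ∘ₗ T ∘ₗ (LinearMap.snd K D V)) := by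
  have hpl0 : ∀ x : D, pl x 0 = 0 := fun x => by
    have := hV.bil_pl.2.2.2 (0 : K) x 0; simpa using this
  have hsl0 : ∀ x : D, sl x 0 = 0 := fun x => by
    have := hV.bil_sl.2.2.2 (0 : K) x 0; simpa using this
  have hpr0 : ∀ x : D, pr 0 x = 0 := fun x => by
    have := hV.bil_pr.2.1 (0 : K) 0 x; simpa using this
  have hsr0 : ∀ x : D, sr 0 x = 0 := fun x => by
    have := hV.bil_sr.2.1 (0 : K) 0 x; simpa using this
  intro a b
  refine ⟨?_, ?_, ?_, ?_⟩
  · ext <;> simp [hpl0, hpr0, hsl0, hsr0, (hT a.2 b.2).1]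
  · ext <;> simp [hpl0, hpr0, hsl0, hsr0, (hT a.2 b.2).2.1]
  · ext <;> simp [hpl0, hpr0, hsl0, hsr0, (hT a.2 b.2).2.2.1]
  · ext <;> simp [hpl0, hpr0, hsl0, hsr0, (hT a.2 b.2).2.2.2]
end

section
/- Let (D, ≺, ≻) and (D', ≺', ≻') be dendriform algebras over a field K of characteristic zero, and let ≺ₗ, ≻ₗ : D × D' → D' and ≺ᵣ, ≻ᵣ : D' × D → D' be bilinear maps. Then (D', ≺', ≻'; ≺ₗ, ≻ₗ, ≺ᵣ, ≻ᵣ) is an action of D on D' if and only if D ⊕ D' equipped with the operations (x,u) ≺⋈ (y,v) = (x≺y, x≺ₗv + u≺ᵣy + u≺'v) and (x,u) ≻⋈ (y,v) = (x≻y, x≻ₗv + u≻ᵣy + u≻'v) is a dendriform algebra. -/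
section Helpers

variable {K : Type*} [Field K] {A B C : Type*}
  [AddCommGroup A] [Module K A] [AddCommGroup B] [Module K B]
  [AddCommGroup C] [Module K C]

lemma IsBilin.zl {f : A → B → C} (h : IsBilin K f) (b : B) : f 0 b = 0 := by
  have := h.2.1 0 0 b; simpa using this

lemma IsBilin.zr {f : A → B → C} (h : IsBilin K f) (a : A) : f a 0 = 0 := by
  have := h.2.2.2 0 a 0; simpa using this

lemma bilin_pair {D D' : Type*} [AddCommGroup D] [Module K D]
    [AddCommGroup D'] [Module K D']
    {f : D → D → D} {g : D → D' → D'} {h : D' → D → D'} {k : D' → D' → D'}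
    (hf : IsBilin K f) (hg : IsBilin K g) (hh : IsBilin K h) (hk : IsBilin K k) :
    IsBilin K (fun a b : D × D' => (f a.1 b.1, g a.1 b.2 + h a.2 b.1 + k a.2 b.2)) := by
  refine ⟨fun a a' b => ?_, fun c a b => ?_, fun a b b' => ?_, fun c a b => ?_⟩ <;>
  · refine Prod.ext ?_ ?_
    · simp [hf.1, hf.2.1, hf.2.2.1, hf.2.2.2]
    · simp only [Prod.fst_add, Prod.snd_add, Prod.smul_fst, Prod.smul_snd,
        hg.1, hg.2.1, hg.2.2.1, hg.2.2.2, hh.1, hh.2.1, hh.2.2.1, hh.2.2.2,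
        hk.1, hk.2.1, hk.2.2.1, hk.2.2.2, smul_add]
      try abel

end Helpers

theorem stmt_15 (K : Type*) [Field K] [CharZero K]
    (D : Type*) [AddCommGroup D] [Module K D]
    (D' : Type*) [AddCommGroup D'] [Module K D']
    (p s : D → D → D) (p' s' : D' → D' → D')
    (pl sl : D → D' → D') (pr sr : D' → D → D')
    (hD : IsDendriform K D p s)
    (hD' : IsDendriform K D' p' s')
    (hpl : IsBilin K pl) (hsl : IsBilin K sl)
    (hpr : IsBilin K pr) (hsr : IsBilin K sr) :
    IsDendAction K D D' p s p' s' pl sl pr sr ↔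
      IsDendriform K (D × D')
        (fun a b => (p a.1 b.1, pl a.1 b.2 + pr a.2 b.1 + p' a.2 b.2))
        (fun a b => (s a.1 b.1, sl a.1 b.2 + sr a.2 b.1 + s' a.2 b.2)) := by
  constructor
  · intro A
    refine ⟨bilin_pair hD.bil_p hpl hpr hD'.bil_p,
            bilin_pair hD.bil_s hsl hsr hD'.bil_s, ?_, ?_, ?_⟩
    · intro x y z
      have h1 : pl (p x.1 y.1) z.2 = pl x.1 (pl y.1 z.2) + pl x.1 (sl y.1 z.2) := by
        rw [A.rep.r1, hpl.2.2.1]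
      have h2 : pr (pl x.1 y.2) z.1 = pl x.1 (pr y.2 z.1) + pl x.1 (sr y.2 z.1) := by
        rw [A.rep.r4, hpl.2.2.1]
      have h3 : pr (pr x.2 y.1) z.1 = pr x.2 (p y.1 z.1) + pr x.2 (s y.1 z.1) := by
        rw [A.rep.r7, hpr.2.2.1]
      have h4 : pr (p' x.2 y.2) z.1 = p' x.2 (pr y.2 z.1) + p' x.2 (sr y.2 z.1) := by
        rw [A.a7, hD'.bil_p.2.2.1]
      have h5 : p' (pl x.1 y.2) z.2 = pl x.1 (p' y.2 z.2) + pl x.1 (s' y.2 z.2) := by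
        rw [A.a1, hpl.2.2.1]
      have h6 : p' (pr x.2 y.1) z.2 = p' x.2 (pl y.1 z.2) + p' x.2 (sl y.1 z.2) := by
        rw [A.a4, hD'.bil_p.2.2.1]
      have h7 : p' (p' x.2 y.2) z.2 = p' x.2 (p' y.2 z.2) + p' x.2 (s' y.2 z.2) := by
        rw [hD'.d1, hD'.bil_p.2.2.1]
      refine Prod.ext ?_ ?_
      · simpa using hD.d1 x.1 y.1 z.1
      · simp only [Prod.fst_add, Prod.snd_add, hpl.1, hpl.2.2.1, hpr.1, hpr.2.2.1,
          hsl.1, hsl.2.2.1, hsr.1, hsr.2.2.1, hD'.bil_p.1, hD'.bil_p.2.2.1,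
          hD'.bil_s.1, hD'.bil_s.2.2.1]
        rw [h1, h2, h3, h4, h5, h6, h7]
        abel
    · intro x y z
      have h1 : pl (s x.1 y.1) z.2 = sl x.1 (pl y.1 z.2) := A.rep.r2 ..
      have h2 : pr (sl x.1 y.2) z.1 = sl x.1 (pr y.2 z.1) := A.rep.r5 ..
      have h3 : pr (sr x.2 y.1) z.1 = sr x.2 (p y.1 z.1) := A.rep.r8 ..
      have h4 : pr (s' x.2 y.2) z.1 = s' x.2 (pr y.2 z.1) := A.a8 ..
      have h5 : p' (sl x.1 y.2) z.2 = sl x.1 (p' y.2 z.2) := A.a2 ..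
      have h6 : p' (sr x.2 y.1) z.2 = s' x.2 (pl y.1 z.2) := A.a5 ..
      have h7 : p' (s' x.2 y.2) z.2 = s' x.2 (p' y.2 z.2) := hD'.d2 ..
      refine Prod.ext ?_ ?_
      · simpa using hD.d2 x.1 y.1 z.1
      · simp only [Prod.fst_add, Prod.snd_add, hpl.1, hpl.2.2.1, hpr.1, hpr.2.2.1,
          hsl.1, hsl.2.2.1, hsr.1, hsr.2.2.1, hD'.bil_p.1, hD'.bil_p.2.2.1,
          hD'.bil_s.1, hD'.bil_s.2.2.1]
        rw [h1, h2, h3, h4, h5, h6, h7]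
        abel
    · intro x y z
      have h1 : sl x.1 (sl y.1 z.2) = sl (p x.1 y.1) z.2 + sl (s x.1 y.1) z.2 := by
        rw [A.rep.r3, hsl.1]
      have h2 : sl x.1 (sr y.2 z.1) = sr (pl x.1 y.2) z.1 + sr (sl x.1 y.2) z.1 := by
        rw [A.rep.r6, hsr.1]
      have h3 : sr x.2 (s y.1 z.1) = sr (pr x.2 y.1) z.1 + sr (sr x.2 y.1) z.1 := by
        rw [A.rep.r9, hsr.1]
      have h4 : s' x.2 (sr y.2 z.1) = sr (p' x.2 y.2) z.1 + sr (s' x.2 y.2) z.1 := by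
        rw [A.a9, hsr.1]
      have h5 : sl x.1 (s' y.2 z.2) = s' (pl x.1 y.2) z.2 + s' (sl x.1 y.2) z.2 := by
        rw [A.a3, hD'.bil_s.1]
      have h6 : s' x.2 (sl y.1 z.2) = s' (pr x.2 y.1) z.2 + s' (sr x.2 y.1) z.2 := by
        rw [A.a6, hD'.bil_s.1]
      have h7 : s' x.2 (s' y.2 z.2) = s' (p' x.2 y.2) z.2 + s' (s' x.2 y.2) z.2 := by
        rw [hD'.d3, hD'.bil_s.1]
      refine Prod.ext ?_ ?_
      · simpa using hD.d3 x.1 y.1 z.1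
      · simp only [Prod.fst_add, Prod.snd_add, hpl.1, hpl.2.2.1, hpr.1, hpr.2.2.1,
          hsl.1, hsl.2.2.1, hsr.1, hsr.2.2.1, hD'.bil_p.1, hD'.bil_p.2.2.1,
          hD'.bil_s.1, hD'.bil_s.2.2.1]
        rw [h1, h2, h3, h4, h5, h6, h7]
        abel
  · intro H
    refine ⟨⟨hpl, hsl, hpr, hsr, ?_, ?_, ?_, ?_, ?_, ?_, ?_, ?_, ?_⟩,
            ?_, ?_, ?_, ?_, ?_, ?_, ?_, ?_, ?_⟩
    · intro x y u
      simpa [hpl.zl, hpl.zr, hsl.zl, hsl.zr, hpr.zl, hpr.zr, hsr.zl, hsr.zr,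
        hD'.bil_p.zl, hD'.bil_p.zr, hD'.bil_s.zl, hD'.bil_s.zr,
        hD.bil_p.zl, hD.bil_p.zr, hD.bil_s.zl, hD.bil_s.zr]
        using congrArg Prod.snd (H.d1 (x, 0) (y, 0) (0, u))
    · intro x y u
      simpa [hpl.zl, hpl.zr, hsl.zl, hsl.zr, hpr.zl, hpr.zr, hsr.zl, hsr.zr,
        hD'.bil_p.zl, hD'.bil_p.zr, hD'.bil_s.zl, hD'.bil_s.zr,
        hD.bil_p.zl, hD.bil_p.zr, hD.bil_s.zl, hD.bil_s.zr]
        using congrArg Prod.snd (H.d2 (x, 0) (y, 0) (0, u))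
    · intro x y u
      simpa [hpl.zl, hpl.zr, hsl.zl, hsl.zr, hpr.zl, hpr.zr, hsr.zl, hsr.zr,
        hD'.bil_p.zl, hD'.bil_p.zr, hD'.bil_s.zl, hD'.bil_s.zr,
        hD.bil_p.zl, hD.bil_p.zr, hD.bil_s.zl, hD.bil_s.zr]
        using congrArg Prod.snd (H.d3 (x, 0) (y, 0) (0, u))
    · intro x u z
      simpa [hpl.zl, hpl.zr, hsl.zl, hsl.zr, hpr.zl, hpr.zr, hsr.zl, hsr.zr,
        hD'.bil_p.zl, hD'.bil_p.zr, hD'.bil_s.zl, hD'.bil_s.zr,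
        hD.bil_p.zl, hD.bil_p.zr, hD.bil_s.zl, hD.bil_s.zr]
        using congrArg Prod.snd (H.d1 (x, 0) (0, u) (z, 0))
    · intro x u z
      simpa [hpl.zl, hpl.zr, hsl.zl, hsl.zr, hpr.zl, hpr.zr, hsr.zl, hsr.zr,
        hD'.bil_p.zl, hD'.bil_p.zr, hD'.bil_s.zl, hD'.bil_s.zr,
        hD.bil_p.zl, hD.bil_p.zr, hD.bil_s.zl, hD.bil_s.zr]
        using congrArg Prod.snd (H.d2 (x, 0) (0, u) (z, 0))
    · intro x u z
      simpa [hpl.zl, hpl.zr, hsl.zl, hsl.zr, hpr.zl, hpr.zr, hsr.zl, hsr.zr,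
        hD'.bil_p.zl, hD'.bil_p.zr, hD'.bil_s.zl, hD'.bil_s.zr,
        hD.bil_p.zl, hD.bil_p.zr, hD.bil_s.zl, hD.bil_s.zr]
        using congrArg Prod.snd (H.d3 (x, 0) (0, u) (z, 0))
    · intro u y z
      simpa [hpl.zl, hpl.zr, hsl.zl, hsl.zr, hpr.zl, hpr.zr, hsr.zl, hsr.zr,
        hD'.bil_p.zl, hD'.bil_p.zr, hD'.bil_s.zl, hD'.bil_s.zr,
        hD.bil_p.zl, hD.bil_p.zr, hD.bil_s.zl, hD.bil_s.zr]
        using congrArg Prod.snd (H.d1 (0, u) (y, 0) (z, 0))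
    · intro u y z
      simpa [hpl.zl, hpl.zr, hsl.zl, hsl.zr, hpr.zl, hpr.zr, hsr.zl, hsr.zr,
        hD'.bil_p.zl, hD'.bil_p.zr, hD'.bil_s.zl, hD'.bil_s.zr,
        hD.bil_p.zl, hD.bil_p.zr, hD.bil_s.zl, hD.bil_s.zr]
        using congrArg Prod.snd (H.d2 (0, u) (y, 0) (z, 0))
    · intro u y z
      simpa [hpl.zl, hpl.zr, hsl.zl, hsl.zr, hpr.zl, hpr.zr, hsr.zl, hsr.zr,
        hD'.bil_p.zl, hD'.bil_p.zr, hD'.bil_s.zl, hD'.bil_s.zr,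
        hD.bil_p.zl, hD.bil_p.zr, hD.bil_s.zl, hD.bil_s.zr]
        using congrArg Prod.snd (H.d3 (0, u) (y, 0) (z, 0))
    · intro x v w
      simpa [hpl.zl, hpl.zr, hsl.zl, hsl.zr, hpr.zl, hpr.zr, hsr.zl, hsr.zr,
        hD'.bil_p.zl, hD'.bil_p.zr, hD'.bil_s.zl, hD'.bil_s.zr,
        hD.bil_p.zl, hD.bil_p.zr, hD.bil_s.zl, hD.bil_s.zr]
        using congrArg Prod.snd (H.d1 (x, 0) (0, v) (0, w))
    · intro x v w
      simpa [hpl.zl, hpl.zr, hsl.zl, hsl.zr, hpr.zl, hpr.zr, hsr.zl, hsr.zr,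
        hD'.bil_p.zl, hD'.bil_p.zr, hD'.bil_s.zl, hD'.bil_s.zr,
        hD.bil_p.zl, hD.bil_p.zr, hD.bil_s.zl, hD.bil_s.zr]
        using congrArg Prod.snd (H.d2 (x, 0) (0, v) (0, w))
    · intro x v w
      simpa [hpl.zl, hpl.zr, hsl.zl, hsl.zr, hpr.zl, hpr.zr, hsr.zl, hsr.zr,
        hD'.bil_p.zl, hD'.bil_p.zr, hD'.bil_s.zl, hD'.bil_s.zr,
        hD.bil_p.zl, hD.bil_p.zr, hD.bil_s.zl, hD.bil_s.zr]
        using congrArg Prod.snd (H.d3 (x, 0) (0, v) (0, w))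
    · intro u y w
      simpa [hpl.zl, hpl.zr, hsl.zl, hsl.zr, hpr.zl, hpr.zr, hsr.zl, hsr.zr,
        hD'.bil_p.zl, hD'.bil_p.zr, hD'.bil_s.zl, hD'.bil_s.zr,
        hD.bil_p.zl, hD.bil_p.zr, hD.bil_s.zl, hD.bil_s.zr]
        using congrArg Prod.snd (H.d1 (0, u) (y, 0) (0, w))
    · intro u y w
      simpa [hpl.zl, hpl.zr, hsl.zl, hsl.zr, hpr.zl, hpr.zr, hsr.zl, hsr.zr,
        hD'.bil_p.zl, hD'.bil_p.zr, hD'.bil_s.zl, hD'.bil_s.zr,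
        hD.bil_p.zl, hD.bil_p.zr, hD.bil_s.zl, hD.bil_s.zr]
        using congrArg Prod.snd (H.d2 (0, u) (y, 0) (0, w))
    · intro u y w
      simpa [hpl.zl, hpl.zr, hsl.zl, hsl.zr, hpr.zl, hpr.zr, hsr.zl, hsr.zr,
        hD'.bil_p.zl, hD'.bil_p.zr, hD'.bil_s.zl, hD'.bil_s.zr,
        hD.bil_p.zl, hD.bil_p.zr, hD.bil_s.zl, hD.bil_s.zr]
        using congrArg Prod.snd (H.d3 (0, u) (y, 0) (0, w))
    · intro u v z
      simpa [hpl.zl, hpl.zr, hsl.zl, hsl.zr, hpr.zl, hpr.zr, hsr.zl, hsr.zr,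
        hD'.bil_p.zl, hD'.bil_p.zr, hD'.bil_s.zl, hD'.bil_s.zr,
        hD.bil_p.zl, hD.bil_p.zr, hD.bil_s.zl, hD.bil_s.zr]
        using congrArg Prod.snd (H.d1 (0, u) (0, v) (z, 0))
    · intro u v z
      simpa [hpl.zl, hpl.zr, hsl.zl, hsl.zr, hpr.zl, hpr.zr, hsr.zl, hsr.zr,
        hD'.bil_p.zl, hD'.bil_p.zr, hD'.bil_s.zl, hD'.bil_s.zr,
        hD.bil_p.zl, hD.bil_p.zr, hD.bil_s.zl, hD.bil_s.zr]
        using congrArg Prod.snd (H.d2 (0, u) (0, v) (z, 0))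
    · intro u v z
      simpa [hpl.zl, hpl.zr, hsl.zl, hsl.zr, hpr.zl, hpr.zr, hsr.zl, hsr.zr,
        hD'.bil_p.zl, hD'.bil_p.zr, hD'.bil_s.zl, hD'.bil_s.zr,
        hD.bil_p.zl, hD.bil_p.zr, hD.bil_s.zl, hD.bil_s.zr]
        using congrArg Prod.snd (H.d3 (0, u) (0, v) (z, 0))
end
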